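/- Let Λ be a lattice in ℝ^d and let f ∈ L¹(ℝ^d) tile with Λ at level c ≠ 0. Then the essential support of f has Lebesgue measure at least vol(Λ): |supp f| ≥ vol(Λ). -/

import Mathlib

/-!
If the tiling sum is a.e. equal to `c ≠ 0`, then a.e. `x` has some `λ ∈ Λ` with `f (x - λ) ≠ 0`,
so the translates `λ + supp f` cover `ℝ^d` up to a null set. Intersecting them with a fundamental
domain `F` of `Λ` and translating the pieces back, `|F| ≤ ∑_λ |(λ + supp f) ∩ F| = |supp f|`,
and `|F| = |det A|` for the parallelepiped spanned by the columns of `A`.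
-/

open MeasureTheory Convolution

noncomputable section

/-- The lattice `A·ℤ^d` in `ℝ^d`. -/
def latticeOf {d : ℕ} (A : Matrix (Fin d) (Fin d) ℝ) :
    Set (EuclideanSpace ℝ (Fin d)) :=
  {x | ∃ m : Fin d → ℤ, x = A.mulVec (fun i => (m i : ℝ))}

/-- `f` tiles with the set `Λ` at level `c`: for a.e. `x` the series
`∑_{λ∈Λ} f(x-λ)` converges (absolutely, as summability in `ℝ` is absolute) to `c`. -/
def TilesAt {d : ℕ} (f : EuclideanSpace ℝ (Fin d) → ℝ)
    (Λ : Set (EuclideanSpace ℝ (Fin d))) (c : ℝ) : Prop :=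
  ∀ᵐ x : EuclideanSpace ℝ (Fin d),
    (Summable fun l : Λ => f (x - (l : EuclideanSpace ℝ (Fin d)))) ∧
    ∑' l : Λ, f (x - (l : EuclideanSpace ℝ (Fin d))) = c

/-- The essential support of `f`: the smallest closed set outside of which `f` vanishes a.e. -/
def essSupp {α E : Type*} [TopologicalSpace α] [MeasureSpace α] [Zero E]
    (f : α → E) : Set α :=
  ⋂₀ {S : Set α | IsClosed S ∧ ∀ᵐ x, x ∉ S → f x = 0}

/-- Iterated convolution `f₁ * f₂ * ⋯ * f_N` of a list of functions. -/
def convList {d : ℕ} :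
    List (EuclideanSpace ℝ (Fin d) → ℝ) → (EuclideanSpace ℝ (Fin d) → ℝ)
  | [] => fun _ => 0
  | [g] => g
  | g :: gs => g ⋆[ContinuousLinearMap.lsmul ℝ ℝ] convList gs

open Pointwise Submodule

theorem MeasureTheory.IsAddFundamentalDomain.measure_le_of_ae_covers {G α : Type*}
    [AddGroup G] [AddAction G α] [MeasurableSpace α] {μ : Measure α} [Countable G]
    [MeasurableSpace G] [MeasurableVAdd G α] [VAddInvariantMeasure G α μ] {s t : Set α}
    (hs : IsAddFundamentalDomain G s μ) (ht : ∀ᵐ x ∂μ, ∃ g : G, x ∈ g +ᵥ t) : μ s ≤ μ t := by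
  have hcover : s ≤ᵐ[μ] ⋃ g : G, (g +ᵥ t) ∩ s := by
    filter_upwards [ht] with x ⟨g, hg⟩ hx
    exact Set.mem_iUnion.mpr ⟨g, hg, hx⟩
  calc μ s ≤ μ (⋃ g : G, (g +ᵥ t) ∩ s) := measure_mono_ae hcover
    _ ≤ ∑' g : G, μ ((g +ᵥ t) ∩ s) := measure_iUnion_le _
    _ = μ t := (hs.measure_eq_tsum t).symm

lemma ae_mem_essSupp {α E : Type*} [TopologicalSpace α] [SecondCountableTopology α]
    [MeasureSpace α] [Zero E] (f : α → E) :
    ∀ᵐ x, f x ≠ 0 → x ∈ essSupp f := by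
  simp_rw [ae_iff, Classical.not_imp]
  refine measure_null_of_locally_null _ fun x ⟨_, hx⟩ => ?_
  obtain ⟨S, hS, hfS, hxS⟩ : ∃ S, IsClosed S ∧ (∀ᵐ x, x ∉ S → f x = 0) ∧ x ∉ S := by
    simpa [essSupp] using hx
  refine ⟨Sᶜ ∩ _, Filter.inter_mem (nhdsWithin_le_nhds (hS.isOpen_compl.mem_nhds hxS))
    self_mem_nhdsWithin, ?_⟩
  refine measure_mono_null ?_ (ae_iff.mp hfS)
  exact fun y ⟨hyS, hfy, _⟩ h => hfy (h hyS)

theorem TilesAt.ae_exists_sub_mem_essSupp {d : ℕ} {f : EuclideanSpace ℝ (Fin d) → ℝ}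
    {Λ : Set (EuclideanSpace ℝ (Fin d))} {c : ℝ} (hΛ : Λ.Countable) (ht : TilesAt f Λ c)
    (hc : c ≠ 0) : ∀ᵐ x, ∃ l ∈ Λ, x - l ∈ essSupp f := by
  have := hΛ.to_subtype
  have hsupp : ∀ᵐ x, ∀ l : Λ, f (x - l) ≠ 0 → x - l ∈ essSupp f :=
    ae_all_iff.mpr fun l =>
      (measurePreserving_sub_right volume (l : EuclideanSpace ℝ (Fin d))).quasiMeasurePreserving.ae
        (ae_mem_essSupp f)
  filter_upwards [ht, hsupp] with x ⟨_, hsum⟩ hx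
  by_contra! hnone
  have hzero : ∀ l : Λ, f (x - l) = 0 := fun l => by
    by_contra h
    exact hnone l l.2 (hx l h)
  exact hc (by rw [← hsum, tsum_congr hzero, tsum_zero])

section LatticeBasis

variable {d : ℕ} (A : Matrix (Fin d) (Fin d) ℝ) (hA : A.det ≠ 0)

def latticeBasis : Module.Basis (Fin d) ℝ (EuclideanSpace ℝ (Fin d)) :=
  let e := (EuclideanSpace.basisFun (Fin d) ℝ).toBasis
  e.map (Matrix.toLinearEquiv e A (isUnit_iff_ne_zero.mpr hA))

theorem sum_zsmul_latticeBasis (m : Fin d → ℤ) :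
    ∑ i, m i • latticeBasis A hA i = WithLp.toLp 2 (A.mulVec fun i => (m i : ℝ)) := by
  have : ∑ i, m i • (EuclideanSpace.basisFun (Fin d) ℝ).toBasis i =
      WithLp.toLp 2 (fun i => (m i : ℝ)) := by
    ext j; simp [Pi.single_apply]
  simp only [latticeBasis, Module.Basis.map_apply, ← map_zsmul, ← map_sum, this]
  rfl

theorem coe_span_latticeBasis :
    (span ℤ (Set.range (latticeBasis A hA)) : Set (EuclideanSpace ℝ (Fin d))) = latticeOf A := by
  ext x
  simp only [SetLike.mem_coe, mem_span_range_iff_exists_fun, sum_zsmul_latticeBasis]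
  exact exists_congr fun m => ⟨fun h => by rw [← h], fun h => congrArg (WithLp.toLp 2) h.symm⟩

theorem volume_fundamentalDomain_latticeBasis :
    volume (ZSpan.fundamentalDomain (latticeBasis A hA)) = ENNReal.ofReal |A.det| := by
  set e := (EuclideanSpace.basisFun (Fin d) ℝ).toBasis
  have hdet : e.det (latticeBasis A hA) = A.det := by
    rw [show ⇑(latticeBasis A hA) = Matrix.toLin e e A ∘ e from rfl, Module.Basis.det_comp,
      LinearMap.det_toLin, Module.Basis.det_self, mul_one]
  rw [ZSpan.measure_fundamentalDomain _ volume e, hdet,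
    measure_congr (ZSpan.fundamentalDomain_ae_parallelepiped _ volume)]
  simp [e, OrthonormalBasis.volume_parallelepiped]

end LatticeBasis

theorem support_volume_lower_bound_single_lattice_general
    {d : ℕ} (A : Matrix (Fin d) (Fin d) ℝ) (hA : A.det ≠ 0)
    (f : EuclideanSpace ℝ (Fin d) → ℝ)
    (c : ℝ) (hc : c ≠ 0) (ht : TilesAt f (latticeOf A) c) :
    ENNReal.ofReal |A.det| ≤ volume (essSupp f) := by
  -- Mathlib provides the measurability of the translation action for `AddSubgroup`s only.
  set L := (span ℤ (Set.range (latticeBasis A hA))).toAddSubgroup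
  have hL : (L : Set (EuclideanSpace ℝ (Fin d))) = latticeOf A := coe_span_latticeBasis A hA
  have : Countable L := inferInstanceAs (Countable (span ℤ (Set.range (latticeBasis A hA))))
  rw [← hL] at ht
  have hcover : ∀ᵐ x, ∃ l : L, x ∈ l +ᵥ essSupp f := by
    filter_upwards [ht.ae_exists_sub_mem_essSupp (Set.countable_coe_iff.mp this) hc]
      with x ⟨l, hl, hx⟩
    refine ⟨⟨l, hl⟩, Set.mem_vadd_set_iff_neg_vadd_mem.mpr ?_⟩
    rwa [AddSubgroup.vadd_def, vadd_eq_add, AddSubgroup.coe_neg, neg_add_eq_sub]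
  rw [← volume_fundamentalDomain_latticeBasis A hA]
  exact (ZSpan.isAddFundamentalDomain' _ volume).measure_le_of_ae_covers hcover

/-- If `f ∈ L¹(ℝ^d)` tiles with the lattice `Λ = A·ℤ^d` at level
`c ≠ 0`, then `|supp f| ≥ vol(Λ) = |det A|`. -/
theorem support_volume_lower_bound_single_lattice
    {d : ℕ} (A : Matrix (Fin d) (Fin d) ℝ) (hA : A.det ≠ 0)
    (f : EuclideanSpace ℝ (Fin d) → ℝ) (hf : Integrable f)
    (c : ℝ) (hc : c ≠ 0) (ht : TilesAt f (latticeOf A) c) :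
    ENNReal.ofReal |A.det| ≤ volume (essSupp f) :=
  support_volume_lower_bound_single_lattice_general A hA f c hc ht

end
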